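/- Let k be a field of characteristic 2, G a finite group, and ε : G → ℤ/2ℤ a nontrivial essential character. Set G_c = {g ∈ G : ε(g) = 1} and let S ⊆ G_c satisfy S ∩ S⁻¹ = ∅ and S ∪ S⁻¹ = G_c. For a hermitian element h of k[G] set h_ε = Σ_{s∈S} δ_s(h). Then for every a ∈ k[G]: (a·h·a*)_ε = t(a)²·h_ε + t(h)·t₊(a)·t₋(a), where t₊(a) = Σ_{g : ε(g)=0} δ_g(a) and t₋(a) = Σ_{g : ε(g)=1} δ_g(a). -/

import Mathlib

/-!
Both sides are quadratic forms `∑ x, ∑ z, a_x a_z B(x, z)` in the coefficients of `a`, so it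
suffices to compare their diagonals `B(x, x)` and polarisations `B(x, z) + B(z, x)`. For the
left side `B(x, z) = ∑_{s ∈ S} h_{x⁻¹ s z}`. Its polarisation is, since `h` is hermitian and
`G_c = S ⊔ S⁻¹`, the sum of `h` over `{y | ε y = 1 + ε x + ε z}`; in
characteristic 2 the sum of a hermitian `h` over `G_c` vanishes (pair `g` with `g⁻¹`; `G_c` has
no involutions), which leaves `0` or `t(h)`. The diagonal `∑_{s ∈ S} h_{x⁻¹ s x}` is the sum of
`h` over the half `x⁻¹ S x` of `G_c`, and the same pairing shows that it does not depend on the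
half.
-/

/-- The canonical involution `x ↦ x*` of the group algebra `k[G]`, determined by
`g* = g⁻¹` for `g ∈ G`. -/
noncomputable def gStar {k G : Type*} [Semiring k] [Group G] (x : MonoidAlgebra k G) :
    MonoidAlgebra k G := MonoidAlgebra.ofCoeff (Finsupp.equivMapDomain (Equiv.inv G) x.coeff)

open Finset

theorem sum_mul_mul_eq_of_diag_eq_of_polar_eq {ι R : Type*} [Fintype ι] [CommRing R] (a : ι → R)
    {B C : ι → ι → R} (hdiag : ∀ i, B i i = C i i)
    (hpolar : ∀ i j, B i j + B j i = C i j + C j i) :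
    ∑ i, ∑ j, a i * a j * B i j = ∑ i, ∑ j, a i * a j * C i j := by
  rw [← sub_eq_zero]
  simp only [← sum_sub_distrib]
  rw [← Fintype.sum_prod_type']
  refine sum_ninvolution Prod.swap (fun p => ?_) (fun p hp hswap => hp ?_) (fun _ => mem_univ _)
    Prod.swap_swap
  · simp only [Prod.fst_swap, Prod.snd_swap]
    linear_combination (a p.1 * a p.2) * (hpolar p.1 p.2)
  · obtain ⟨i, j⟩ := p
    obtain rfl : j = i := congrArg Prod.fst hswap
    rw [hdiag, sub_self]

lemma sum_sq_mul_add_mul_sum_filter_mul_sum_filter {ι R : Type*} [Fintype ι] [CommSemiring R]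
    (a : ι → R) (c t : R) (p q : ι → Prop) [DecidablePred p] [DecidablePred q] :
    (∑ i, a i) ^ 2 * c + t * (∑ i with p i, a i) * (∑ j with q j, a j) =
      ∑ i, ∑ j, a i * a j * (c + if p i ∧ q j then t else 0) := by
  have hterm (i j : ι) : a i * a j * (c + if p i ∧ q j then t else 0) =
      a i * a j * c + t * ((if p i then a i else 0) * if q j then a j else 0) := by
    rw [ite_zero_mul_ite_zero]
    split_ifs <;> ring
  simp only [hterm, sum_add_distrib, ← sum_mul, ← mul_sum, sum_filter]
  ring

section GroupAlgebra

variable {k G : Type*} [Group G]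

lemma coeff_gStar [Semiring k] (x : MonoidAlgebra k G) (g : G) :
    (gStar x).coeff g = x.coeff g⁻¹ := rfl

lemma coeff_inv_of_gStar_eq [Semiring k] {h : MonoidAlgebra k G} (hh : gStar h = h) (g : G) :
    h.coeff g⁻¹ = h.coeff g := by
  rw [← coeff_gStar, hh]

variable [Fintype G]

lemma coeff_mul_eq_sum [Semiring k] (x y : MonoidAlgebra k G) (g : G) :
    (x * y).coeff g = ∑ u, x.coeff u * y.coeff (u⁻¹ * g) := by
  rw [MonoidAlgebra.coeff_mul_apply_left, Finsupp.sum_fintype _ _ (by simp)]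

lemma coeff_mul_mul_gStar [CommSemiring k] (a h : MonoidAlgebra k G) (s : G) :
    (a * h * gStar a).coeff s =
      ∑ x, ∑ z, a.coeff x * a.coeff z * h.coeff (x⁻¹ * s * z) := by
  rw [coeff_mul_eq_sum, ← Equiv.sum_comp (Equiv.mulLeft s)]
  simp only [coeff_mul_eq_sum, coeff_gStar, sum_mul]
  rw [sum_comm]
  refine sum_congr rfl fun x _ => sum_congr rfl fun z _ => ?_
  simp only [Equiv.coe_mulLeft, mul_inv_rev, inv_mul_cancel_left, inv_inv, mul_assoc]
  ring

end GroupAlgebra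

section Character

variable {G : Type*} [Group G] {ε : G → ZMod 2}

lemma eps_one (hε : ∀ a b, ε (a * b) = ε a + ε b) : ε 1 = 0 := by
  simpa using hε 1 1

lemma eps_inv (hε : ∀ a b, ε (a * b) = ε a + ε b) (g : G) : ε g⁻¹ = ε g := by
  have := hε g g⁻¹
  rw [mul_inv_cancel, eps_one hε] at this
  exact (CharTwo.add_eq_zero.mp this.symm).symm

lemma eps_conj (hε : ∀ a b, ε (a * b) = ε a + ε b) (x g : G) : ε (x * g * x⁻¹) = ε g := by
  rw [hε, hε, eps_inv hε, add_right_comm, CharTwo.add_self_eq_zero, zero_add]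

lemma eps_eq_zero_of_inv_eq (hess : ∀ g : G, g ^ 2 = 1 → ε g = 0) {g : G} (hg : g⁻¹ = g) :
    ε g = 0 :=
  hess g (by rw [sq, ← inv_eq_iff_mul_eq_one.mp hg])

variable {S : Finset G} (hε : ∀ a b, ε (a * b) = ε a + ε b) (hS1 : ∀ s ∈ S, ε s = 1)
  (hS2 : ∀ s ∈ S, s⁻¹ ∉ S) (hS3 : ∀ g : G, ε g = 1 → g ∈ S ∨ g⁻¹ ∈ S)
include hε hS1 hS2 hS3

lemma ite_mem_add_ite_inv_mem [DecidableEq G] {M : Type*} [AddMonoid M] (g : G) (c : M) :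
    ((if g ∈ S then c else 0) + if g⁻¹ ∈ S then c else 0) = if ε g = 1 then c else 0 := by
  by_cases hg : g ∈ S
  · rw [if_pos hg, if_neg (hS2 g hg), if_pos (hS1 g hg), add_zero]
  by_cases hg' : g⁻¹ ∈ S
  · rw [if_neg hg, if_pos hg', if_pos (eps_inv hε g ▸ hS1 _ hg'), zero_add]
  · rw [if_neg hg, if_neg hg', if_neg fun h => (hS3 g h).elim hg hg', add_zero]

lemma sum_add_sum_inv_eq_sum_filter [Fintype G] [DecidableEq G] {M : Type*} [AddCommMonoid M]
    (f : G → M) : ∑ s ∈ S, f s + ∑ s ∈ S, f s⁻¹ = ∑ g with ε g = 1, f g := by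
  rw [← Fintype.sum_ite_mem, ← Fintype.sum_ite_mem S (fun s => f s⁻¹),
    ← Equiv.sum_comp (Equiv.inv G) (fun s => if s ∈ S then f s⁻¹ else 0), ← sum_add_distrib,
    sum_filter]
  refine sum_congr rfl fun g _ => ?_
  simpa using ite_mem_add_ite_inv_mem hε hS1 hS2 hS3 g (f g)

end Character

lemma Fintype.sum_eq_zero_of_add_inv_eq_zero {G M : Type*} [Group G] [Fintype G]
    [AddCommMonoid M] {f : G → M} (hf : ∀ g, f g + f g⁻¹ = 0)
    (hfix : ∀ g, g⁻¹ = g → f g = 0) : ∑ g, f g = 0 :=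
  sum_ninvolution (·⁻¹) hf (fun g hg hg' => hg (hfix g hg')) (fun _ => mem_univ _) inv_inv

section Hermitian

variable {k G : Type*} [CommRing k] [CharP k 2] [Group G] [Fintype G] {ε : G → ZMod 2}
  {h : MonoidAlgebra k G} (hε : ∀ a b, ε (a * b) = ε a + ε b)
  (hess : ∀ g : G, g ^ 2 = 1 → ε g = 0) (hh : gStar h = h)
include hε hess hh

lemma sum_filter_eps_eq_one_coeff_eq_zero : ∑ g with ε g = 1, h.coeff g = 0 := by
  rw [sum_filter]
  refine Fintype.sum_eq_zero_of_add_inv_eq_zero (fun g => ?_) (fun g hg => ?_)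
  · rw [eps_inv hε, coeff_inv_of_gStar_eq hh, CharTwo.add_self_eq_zero]
  · rw [if_neg (by rw [eps_eq_zero_of_inv_eq hess hg]; decide)]

lemma sum_filter_eps_ne_one_coeff : ∑ g with ¬ε g = 1, h.coeff g = ∑ g, h.coeff g := by
  rw [← sum_filter_add_sum_filter_not univ (fun g => ε g = 1),
    sum_filter_eps_eq_one_coeff_eq_zero hε hess hh, zero_add]

variable [DecidableEq G] {S : Finset G} (hS1 : ∀ s ∈ S, ε s = 1) (hS2 : ∀ s ∈ S, s⁻¹ ∉ S)
  (hS3 : ∀ g : G, ε g = 1 → g ∈ S ∨ g⁻¹ ∈ S)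
include hS1 hS2 hS3

lemma sum_coeff_conj (x : G) : ∑ s ∈ S, h.coeff (x⁻¹ * s * x) = ∑ s ∈ S, h.coeff s := by
  have hconj : ∑ s ∈ S, h.coeff (x⁻¹ * s * x) = ∑ g, if x * g * x⁻¹ ∈ S then h.coeff g else 0 := by
    rw [← Fintype.sum_ite_mem]
    exact (Fintype.sum_equiv (MulAut.conj x).toEquiv _ _ fun g => by simp [mul_assoc]).symm
  rw [hconj, ← Fintype.sum_ite_mem S h.coeff]
  refine CharTwo.add_eq_zero.mp ?_
  rw [← sum_add_distrib]
  refine Fintype.sum_eq_zero_of_add_inv_eq_zero (fun g => ?_) (fun g hg => ?_)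
  · rw [coeff_inv_of_gStar_eq hh, show x * g⁻¹ * x⁻¹ = (x * g * x⁻¹)⁻¹ by group,
      add_add_add_comm, ite_mem_add_ite_inv_mem hε hS1 hS2 hS3,
      ite_mem_add_ite_inv_mem hε hS1 hS2 hS3, eps_conj hε, CharTwo.add_self_eq_zero]
  · have hg0 := eps_eq_zero_of_inv_eq hess hg
    have hnotin {u : G} (hu : ε u = 0) : u ∉ S := fun hmem => by
      simpa [hu] using hS1 u hmem
    rw [if_neg (hnotin (by rw [eps_conj hε, hg0])), if_neg (hnotin hg0), add_zero]

lemma sum_coeff_add_sum_coeff_swap (x z : G) :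
    ∑ s ∈ S, h.coeff (x⁻¹ * s * z) + ∑ s ∈ S, h.coeff (z⁻¹ * s * x) =
      if ε x = ε z then 0 else ∑ g, h.coeff g := by
  have hswap (s : G) : h.coeff (z⁻¹ * s * x) = h.coeff (x⁻¹ * s⁻¹ * z) := by
    rw [← coeff_inv_of_gStar_eq hh]; group
  simp only [hswap]
  rw [sum_add_sum_inv_eq_sum_filter hε hS1 hS2 hS3 (fun g => h.coeff (x⁻¹ * g * z)), sum_filter,
    ← Equiv.sum_comp ((Equiv.mulLeft x).trans (Equiv.mulRight z⁻¹)), ← sum_filter]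
  simp only [Equiv.trans_apply, Equiv.coe_mulLeft, Equiv.coe_mulRight, hε, eps_inv hε,
    mul_assoc, inv_mul_cancel_left, inv_mul_cancel, mul_one]
  have parity : ∀ u v w : ZMod 2, u + (v + w) = 1 ↔ (v = 1 ↔ u = w) := by decide
  simp only [parity]
  split_ifs with hxz
  · simpa only [hxz, iff_true] using sum_filter_eps_eq_one_coeff_eq_zero hε hess hh
  · simpa only [hxz, iff_false] using sum_filter_eps_ne_one_coeff hε hess hh

end Hermitian

theorem stmt_18_general (k G : Type*) [Field k] [CharP k 2] [Group G] [Fintype G]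
    (ε : G → ZMod 2) (hhom : ∀ a b : G, ε (a * b) = ε a + ε b)
    (hess : ∀ g : G, g ^ 2 = 1 → ε g = 0)
    (S : Finset G) (hS1 : ∀ s ∈ S, ε s = 1) (hS2 : ∀ s ∈ S, s⁻¹ ∉ S)
    (hS3 : ∀ g : G, ε g = 1 → g ∈ S ∨ g⁻¹ ∈ S)
    (h : MonoidAlgebra k G) (hherm : gStar h = h) (a : MonoidAlgebra k G) :
    ∑ s ∈ S, (a * h * gStar a).coeff s =
      (∑ g : G, a.coeff g) ^ 2 * (∑ s ∈ S, h.coeff s) +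
        (∑ g : G, h.coeff g) * (∑ g ∈ Finset.univ.filter fun g => ε g = 0, a.coeff g) *
          (∑ g ∈ Finset.univ.filter fun g => ε g = 1, a.coeff g) := by
  classical
  have hlhs : ∑ s ∈ S, (a * h * gStar a).coeff s =
      ∑ x, ∑ z, a.coeff x * a.coeff z * ∑ s ∈ S, h.coeff (x⁻¹ * s * z) := by
    simp only [coeff_mul_mul_gStar, mul_sum]
    rw [sum_comm]
    exact sum_congr rfl fun _ _ => sum_comm
  rw [hlhs, sum_sq_mul_add_mul_sum_filter_mul_sum_filter]
  refine sum_mul_mul_eq_of_diag_eq_of_polar_eq _ (fun x => ?_) (fun x z => ?_)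
  · rw [sum_coeff_conj hhom hess hherm hS1 hS2 hS3,
      if_neg fun hx => zero_ne_one (hx.1.symm.trans hx.2), add_zero]
  · rw [sum_coeff_add_sum_coeff_swap hhom hess hherm hS1 hS2 hS3, add_add_add_comm,
      CharTwo.add_self_eq_zero, zero_add]
    have two_cases (u : ZMod 2) : u = 0 ∨ u = 1 := by decide +revert
    rcases two_cases (ε x) with hx | hx <;> rcases two_cases (ε z) with hz | hz <;> simp [hx, hz]

/-- Serre's proposition 7.8.6: let `k` be a field of characteristic 2, `G` a finite
group, `ε : G → ℤ/2ℤ` a nontrivial essential character, `G_c = {g | ε g = 1}`, and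
`S ⊆ G_c` with `S ∩ S⁻¹ = ∅` and `S ∪ S⁻¹ = G_c`. For a hermitian `h ∈ k[G]` set
`h_ε = Σ_{s∈S} δ_s(h)`. Then for all `a ∈ k[G]`:
`(a·h·a*)_ε = t(a)²·h_ε + t(h)·t₊(a)·t₋(a)`, where `t₊(a) = Σ_{ε(g)=0} a_g` and
`t₋(a) = Σ_{ε(g)=1} a_g`. -/
theorem stmt_18 (k G : Type*) [Field k] [CharP k 2] [Group G] [Fintype G]
    (ε : G → ZMod 2) (hhom : ∀ a b : G, ε (a * b) = ε a + ε b)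
    (hess : ∀ g : G, g ^ 2 = 1 → ε g = 0) (hnt : ∃ g : G, ε g ≠ 0)
    (S : Finset G) (hS1 : ∀ s ∈ S, ε s = 1) (hS2 : ∀ s ∈ S, s⁻¹ ∉ S)
    (hS3 : ∀ g : G, ε g = 1 → g ∈ S ∨ g⁻¹ ∈ S)
    (h : MonoidAlgebra k G) (hherm : gStar h = h) (a : MonoidAlgebra k G) :
    ∑ s ∈ S, (a * h * gStar a).coeff s =
      (∑ g : G, a.coeff g) ^ 2 * (∑ s ∈ S, h.coeff s) +
        (∑ g : G, h.coeff g) * (∑ g ∈ Finset.univ.filter fun g => ε g = 0, a.coeff g) *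
          (∑ g ∈ Finset.univ.filter fun g => ε g = 1, a.coeff g) :=
  stmt_18_general k G ε hhom hess S hS1 hS2 hS3 h hherm a
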